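/- Let F(h₁, ..., h_T) = (B·Σ_{s=1}^T n_s h_s²/N_T)² + (Σ/N_T)·Σ_{s=1}^T n_s/(N_T h_s) with B, Σ > 0 and all n_s > 0, N_T = Σ n_s. Then F restricted to (0,∞)^T attains its minimum at the constant bandwidth h_s = (Σ/(4B²))^{1/5} N_T^{−1/5} for all s. -/
import Mathlib


open Finset Real

/-- The terminal AMSE over all positive bandwidth vectors is minimized at the
constant bandwidth `h_s = (Σ/(4B²))^{1/5} N_T^{-1/5}`. -/
theorem stmt_14 (T : ℕ) (hT : 0 < T) (B S : ℝ) (hB : 0 < B) (hS : 0 < S)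
    (n : Fin T → ℝ) (hn : ∀ s, 0 < n s)
    (N : ℝ) (hN : N = ∑ s, n s)
    (F : (Fin T → ℝ) → ℝ)
    (hF : ∀ h, F h = (B * ∑ s, n s * (h s) ^ 2 / N) ^ 2
        + (S / N) * ∑ s, n s / (N * h s))
    (hstar : ℝ)
    (hhstar : hstar = (S / (4 * B ^ 2)) ^ ((1 : ℝ) / 5) * N ^ (-(1 : ℝ) / 5)) :
    ∀ h : Fin T → ℝ, (∀ s, 0 < h s) → F (fun _ => hstar) ≤ F h := by
  intro h hh
  have hne : (Finset.univ : Finset (Fin T)).Nonempty := by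
    have : Nonempty (Fin T) := Fin.pos_iff_nonempty.mp hT
    exact Finset.univ_nonempty
  have hNpos : 0 < N := by
    rw [hN]; exact Finset.sum_pos (fun s _ => hn s) hne
  set w : Fin T → ℝ := fun s => n s / N with hwdef
  have hw : ∀ s, 0 < w s := fun s => div_pos (hn s) hNpos
  have hwsum : ∑ s, w s = 1 := by
    simp only [hwdef, ← Finset.sum_div, ← hN, div_self hNpos.ne']
  set c := S / N with hc
  have hcpos : 0 < c := div_pos hS hNpos
  have hApos : 0 < S / (4 * B ^ 2) := by positivity
  have hstarpos : 0 < hstar := by rw [hhstar]; positivity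
  have h5 : 4 * B ^ 2 * hstar ^ 5 = c := by
    rw [hhstar, hc, mul_pow,
      ← Real.rpow_natCast ((S / (4 * B ^ 2)) ^ ((1 : ℝ) / 5)) 5,
      ← Real.rpow_natCast (N ^ (-(1 : ℝ) / 5)) 5,
      ← Real.rpow_mul hApos.le, ← Real.rpow_mul hNpos.le]
    norm_num
    rw [Real.rpow_neg_one]
    field_simp
  -- key scalar inequality
  have key : ∀ x : ℝ, 0 < x →
      B ^ 2 * hstar ^ 4 + c / hstar ≤ B ^ 2 * x ^ 4 + c / x := by
    intro x hx
    have hfac : 0 ≤ x ^ 3 + 2 * hstar * x ^ 2 + 3 * hstar ^ 2 * x + 4 * hstar ^ 3 := by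
      positivity
    have hdiff : B ^ 2 * x ^ 4 + c / x - (B ^ 2 * hstar ^ 4 + c / hstar)
        = (B ^ 2 / x) * ((x - hstar) ^ 2 *
            (x ^ 3 + 2 * hstar * x ^ 2 + 3 * hstar ^ 2 * x + 4 * hstar ^ 3)) := by
      rw [← h5]; field_simp; ring
    have hnn : 0 ≤ (B ^ 2 / x) * ((x - hstar) ^ 2 *
        (x ^ 3 + 2 * hstar * x ^ 2 + 3 * hstar ^ 2 * x + 4 * hstar ^ 3)) :=
      mul_nonneg (by positivity) (mul_nonneg (sq_nonneg _) hfac)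
    linarith
  set m := ∑ s, w s * h s with hm
  have hmpos : 0 < m := Finset.sum_pos (fun s _ => mul_pos (hw s) (hh s)) hne
  -- Cauchy-Schwarz 1 : m^2 ≤ ∑ w h²
  have CS1 : m ^ 2 ≤ ∑ s, w s * (h s) ^ 2 := by
    have hcs := Finset.sum_mul_sq_le_sq_mul_sq Finset.univ
      (fun s => Real.sqrt (w s)) (fun s => Real.sqrt (w s) * h s)
    have e1 : ∑ s, Real.sqrt (w s) * (Real.sqrt (w s) * h s) = m := by
      refine Finset.sum_congr rfl fun s _ => ?_
      rw [← mul_assoc, Real.mul_self_sqrt (hw s).le]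
    have e2 : ∑ s, Real.sqrt (w s) ^ 2 = 1 := by
      rw [← hwsum]
      exact Finset.sum_congr rfl fun s _ => Real.sq_sqrt (hw s).le
    have e3 : ∑ s, (Real.sqrt (w s) * h s) ^ 2 = ∑ s, w s * (h s) ^ 2 := by
      refine Finset.sum_congr rfl fun s _ => ?_
      rw [mul_pow, Real.sq_sqrt (hw s).le]
    rw [e1, e2, e3, one_mul] at hcs
    exact hcs
  -- Cauchy-Schwarz 2 : 1 ≤ (∑ w/h) * m
  have CS2 : 1 ≤ (∑ s, w s / h s) * m := by
    have hcs := Finset.sum_mul_sq_le_sq_mul_sq Finset.univ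
      (fun s => Real.sqrt (w s / h s)) (fun s => Real.sqrt (w s * h s))
    have e1 : ∑ s, Real.sqrt (w s / h s) * Real.sqrt (w s * h s) = 1 := by
      rw [← hwsum]
      refine Finset.sum_congr rfl fun s _ => ?_
      rw [← Real.sqrt_mul (div_pos (hw s) (hh s)).le]
      have : w s / h s * (w s * h s) = (w s) ^ 2 := by
        field_simp [(hh s).ne']
      rw [this, Real.sqrt_sq (hw s).le]
    have e2 : ∑ s, Real.sqrt (w s / h s) ^ 2 = ∑ s, w s / h s := by
      refine Finset.sum_congr rfl fun s _ => ?_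
      exact Real.sq_sqrt (div_pos (hw s) (hh s)).le
    have e3 : ∑ s, Real.sqrt (w s * h s) ^ 2 = m := by
      refine Finset.sum_congr rfl fun s _ => ?_
      exact Real.sq_sqrt (mul_pos (hw s) (hh s)).le
    rw [e1, e2, e3, one_pow] at hcs
    exact hcs
  -- rewrite F h
  have hFh : F h = B ^ 2 * (∑ s, w s * (h s) ^ 2) ^ 2 + c * ∑ s, w s / h s := by
    have e1 : ∑ s, n s * (h s) ^ 2 / N = ∑ s, w s * (h s) ^ 2 :=
      Finset.sum_congr rfl fun s _ => by rw [mul_div_right_comm]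
    have e2 : ∑ s, n s / (N * h s) = ∑ s, w s / h s :=
      Finset.sum_congr rfl fun s _ => by rw [hwdef, div_div]
    rw [hF, e1, e2, hc]
    ring
  -- value at constant bandwidth
  have hFstar : F (fun _ => hstar) = B ^ 2 * hstar ^ 4 + c / hstar := by
    have e1 : ∑ s, n s * hstar ^ 2 / N = hstar ^ 2 := by
      have : ∑ s, n s * hstar ^ 2 / N = (∑ s, w s) * hstar ^ 2 := by
        rw [Finset.sum_mul]
        exact Finset.sum_congr rfl fun s _ => by rw [mul_div_right_comm]
      rw [this, hwsum, one_mul]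
    have e2 : ∑ s, n s / (N * hstar) = 1 / hstar := by
      have : ∑ s, n s / (N * hstar) = (∑ s, w s) / hstar := by
        rw [Finset.sum_div]
        exact Finset.sum_congr rfl fun s _ => by rw [hwdef, div_div]
      rw [this, hwsum]
    rw [hF, e1, e2, hc]
    ring
  -- combine
  have hW : c / m ≤ c * ∑ s, w s / h s := by
    have h1 : 1 / m ≤ ∑ s, w s / h s := (div_le_iff₀ hmpos).mpr CS2
    calc c / m = c * (1 / m) := by ring
      _ ≤ c * ∑ s, w s / h s := by
          exact mul_le_mul_of_nonneg_left h1 hcpos.le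
  have hP : (m ^ 2) ^ 2 ≤ (∑ s, w s * (h s) ^ 2) ^ 2 :=
    pow_le_pow_left₀ (sq_nonneg m) CS1 2
  have hkey := key m hmpos
  rw [hFstar, hFh]
  nlinarith [sq_nonneg B, mul_le_mul_of_nonneg_left hP (sq_nonneg B)]
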